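/- The Hadamard product of the series Σ_n C(2n,n) t^n with the Apéry ζ(2) generating series Σ_n a_n t^n (a_n = Σ_k C(n,k)^2 C(n+k,k)) is annihilated by L_{3,5} = θ^3 - 2t(2θ+1)(11θ^2+11θ+3) - 4t^2(θ+1)(2θ+1)(2θ+3). -/

import Mathlib

open PowerSeries

/-- The logarithmic derivative `θ = t d/dt` acting on formal power series. -/
noncomputable def theta (f : PowerSeries ℚ) : PowerSeries ℚ :=
  PowerSeries.mk fun n => (n : ℚ) * PowerSeries.coeff n f

/-- The Apéry numbers for ζ(2). -/
def aperyA2 (n : ℕ) : ℚ :=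
  ∑ k ∈ Finset.range (n + 1), (n.choose k : ℚ) ^ 2 * ((n + k).choose k : ℚ)

/-- The Hadamard product `Σ C(2n,n) a_n t^n` of the central binomial series with
the Apéry ζ(2) generating series. -/
noncomputable def hadamard5 : PowerSeries ℚ :=
  PowerSeries.mk fun n => ((2 * n).choose n : ℚ) * aperyA2 n

/-- The operator `11θ^2 + 11θ + 3`. -/
noncomputable def opA (f : PowerSeries ℚ) : PowerSeries ℚ :=
  (11 : ℚ) • theta (theta f) + (11 : ℚ) • theta f + (3 : ℚ) • f


section AuxL35
/-- Summand of the Apéry ζ(2) numbers. -/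
def Fk (n k : ℕ) : ℚ := (n.choose k : ℚ) ^ 2 * ((n + k).choose k : ℚ)

/-- Zeilberger certificate for the Apéry ζ(2) recurrence. -/
def Gc (n k : ℕ) : ℚ :=
  if k ≤ n + 2 then
    ((n : ℚ) + 1) * ((k : ℚ) ^ 2 + (6 * (n : ℚ) + 7) * (k : ℚ)
        - ((n : ℚ) + 2) * (11 * (n : ℚ) + 15)) * (k : ℚ) ^ 3
      * (n.factorial : ℚ) * ((n + k).factorial : ℚ)
      / ((k.factorial : ℚ) ^ 3 * ((n + 2 - k).factorial : ℚ) ^ 2)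
  else 0

set_option maxHeartbeats 4000000 in
lemma tele1 (k m : ℕ) :
    ((k + m : ℚ) + 2) ^ 2 * Fk (k + m + 2) k
      - (11 * (k + m : ℚ) ^ 2 + 33 * (k + m : ℚ) + 25) * Fk (k + m + 1) k
      - ((k + m : ℚ) + 1) ^ 2 * Fk (k + m) k
    = Gc (k + m) (k + 1) - Gc (k + m) k := by
  unfold Fk Gc
  rw [if_pos (by omega : k + 1 ≤ k + m + 2), if_pos (by omega : k ≤ k + m + 2)]
  rw [Nat.cast_choose ℚ (show k ≤ k + m by omega),
      Nat.cast_choose ℚ (show k ≤ k + m + 1 by omega),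
      Nat.cast_choose ℚ (show k ≤ k + m + 2 by omega),
      Nat.cast_choose ℚ (show k ≤ k + m + k by omega),
      Nat.cast_choose ℚ (show k ≤ k + m + 1 + k by omega),
      Nat.cast_choose ℚ (show k ≤ k + m + 2 + k by omega)]
  rw [show k + m - k = m by omega, show k + m + 1 - k = m + 1 by omega,
      show k + m + 2 - k = m + 2 by omega, show k + m + k - k = k + m by omega,
      show k + m + 1 + k - k = k + m + 1 by omega,
      show k + m + 2 + k - k = k + m + 2 by omega,
      show k + m + 2 - (k + 1) = m + 1 by omega]
  rw [show k + m + 1 + k = (k + m + k) + 1 by omega,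
      show k + m + 2 + k = (k + m + k) + 2 by omega,
      show k + m + (k + 1) = (k + m + k) + 1 by omega]
  simp only [show m + 2 = (m + 1) + 1 from rfl,
      show k + m + 2 = ((k + m) + 1) + 1 from rfl,
      show k + m + k + 2 = ((k + m + k) + 1) + 1 from rfl,
      Nat.factorial_succ]
  have hk : (k.factorial : ℚ) ≠ 0 := Nat.cast_ne_zero.mpr (Nat.factorial_ne_zero _)
  have hm : (m.factorial : ℚ) ≠ 0 := Nat.cast_ne_zero.mpr (Nat.factorial_ne_zero _)
  have ha : ((k + m).factorial : ℚ) ≠ 0 := Nat.cast_ne_zero.mpr (Nat.factorial_ne_zero _)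
  have hb : ((k + m + k).factorial : ℚ) ≠ 0 := Nat.cast_ne_zero.mpr (Nat.factorial_ne_zero _)
  push_cast
  field_simp
  ring

set_option maxHeartbeats 4000000 in
lemma tele2 (n : ℕ) :
    ((n : ℚ) + 2) ^ 2 * Fk (n + 2) (n + 1)
      - (11 * (n : ℚ) ^ 2 + 33 * (n : ℚ) + 25) * Fk (n + 1) (n + 1)
      - ((n : ℚ) + 1) ^ 2 * Fk n (n + 1)
    = Gc n (n + 2) - Gc n (n + 1) := by
  unfold Fk Gc
  rw [if_pos (by omega : n + 2 ≤ n + 2), if_pos (by omega : n + 1 ≤ n + 2)]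
  rw [Nat.choose_eq_zero_of_lt (show n < n + 1 by omega)]
  rw [Nat.cast_choose ℚ (show n + 1 ≤ n + 2 by omega),
      Nat.cast_choose ℚ (show n + 1 ≤ n + 1 by omega),
      Nat.cast_choose ℚ (show n + 1 ≤ n + 2 + (n + 1) by omega),
      Nat.cast_choose ℚ (show n + 1 ≤ n + 1 + (n + 1) by omega)]
  rw [show n + 2 - (n + 1) = 1 by omega, show n + 1 - (n + 1) = 0 by omega,
      show n + 2 + (n + 1) - (n + 1) = n + 2 by omega,
      show n + 1 + (n + 1) - (n + 1) = n + 1 by omega,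
      show n + 2 - (n + 2) = 0 by omega]
  rw [show n + 2 + (n + 1) = (n + n) + 3 by omega,
      show n + 1 + (n + 1) = (n + n) + 2 by omega,
      show n + (n + 2) = (n + n) + 2 by omega,
      show n + (n + 1) = (n + n) + 1 by omega]
  simp only [show ∀ x : ℕ, x + 3 = (x + 2) + 1 from fun _ => rfl,
      show ∀ x : ℕ, x + 2 = (x + 1) + 1 from fun _ => rfl,
      Nat.factorial_succ, Nat.factorial_zero, Nat.factorial_one]
  have h1 : (n.factorial : ℚ) ≠ 0 := Nat.cast_ne_zero.mpr (Nat.factorial_ne_zero _)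
  have h2 : ((n + n).factorial : ℚ) ≠ 0 := Nat.cast_ne_zero.mpr (Nat.factorial_ne_zero _)
  push_cast
  field_simp
  ring

set_option maxHeartbeats 4000000 in
lemma tele3 (n : ℕ) :
    ((n : ℚ) + 2) ^ 2 * Fk (n + 2) (n + 2)
      - (11 * (n : ℚ) ^ 2 + 33 * (n : ℚ) + 25) * Fk (n + 1) (n + 2)
      - ((n : ℚ) + 1) ^ 2 * Fk n (n + 2)
    = Gc n (n + 3) - Gc n (n + 2) := by
  unfold Fk Gc
  rw [if_neg (by omega : ¬ n + 3 ≤ n + 2), if_pos (by omega : n + 2 ≤ n + 2)]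
  rw [Nat.choose_eq_zero_of_lt (show n < n + 2 by omega),
      Nat.choose_eq_zero_of_lt (show n + 1 < n + 2 by omega)]
  rw [Nat.cast_choose ℚ (show n + 2 ≤ n + 2 by omega),
      Nat.cast_choose ℚ (show n + 2 ≤ n + 2 + (n + 2) by omega)]
  rw [show n + 2 - (n + 2) = 0 by omega,
      show n + 2 + (n + 2) - (n + 2) = n + 2 by omega]
  rw [show n + 2 + (n + 2) = (n + n) + 4 by omega,
      show n + (n + 2) = (n + n) + 2 by omega]
  simp only [show ∀ x : ℕ, x + 4 = (x + 3) + 1 from fun _ => rfl,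
      show ∀ x : ℕ, x + 3 = (x + 2) + 1 from fun _ => rfl,
      show ∀ x : ℕ, x + 2 = (x + 1) + 1 from fun _ => rfl,
      Nat.factorial_succ, Nat.factorial_zero]
  have h1 : (n.factorial : ℚ) ≠ 0 := Nat.cast_ne_zero.mpr (Nat.factorial_ne_zero _)
  have h2 : ((n + n).factorial : ℚ) ≠ 0 := Nat.cast_ne_zero.mpr (Nat.factorial_ne_zero _)
  push_cast
  field_simp
  ring

lemma tele4 (n k : ℕ) (h : n + 3 ≤ k) :
    ((n : ℚ) + 2) ^ 2 * Fk (n + 2) k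
      - (11 * (n : ℚ) ^ 2 + 33 * (n : ℚ) + 25) * Fk (n + 1) k
      - ((n : ℚ) + 1) ^ 2 * Fk n k
    = Gc n (k + 1) - Gc n k := by
  unfold Fk Gc
  rw [if_neg (by omega : ¬ k + 1 ≤ n + 2), if_neg (by omega : ¬ k ≤ n + 2),
      Nat.choose_eq_zero_of_lt (show n < k by omega),
      Nat.choose_eq_zero_of_lt (show n + 1 < k by omega),
      Nat.choose_eq_zero_of_lt (show n + 2 < k by omega)]
  norm_num

lemma tele (n k : ℕ) :
    ((n : ℚ) + 2) ^ 2 * Fk (n + 2) k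
      - (11 * (n : ℚ) ^ 2 + 33 * (n : ℚ) + 25) * Fk (n + 1) k
      - ((n : ℚ) + 1) ^ 2 * Fk n k
    = Gc n (k + 1) - Gc n k := by
  rcases le_or_gt k n with hk | hk
  · obtain ⟨m, rfl⟩ := Nat.exists_eq_add_of_le hk
    have := tele1 k m
    push_cast at this ⊢
    convert this using 3
  · rcases eq_or_lt_of_le (show n + 1 ≤ k by omega) with h1 | h1
    · subst h1; exact tele2 n
    · rcases eq_or_lt_of_le (show n + 2 ≤ k by omega) with h2 | h2
      · subst h2; exact tele3 n
      · exact tele4 n k (by omega)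

lemma sum_tele (n : ℕ) :
    ∑ k ∈ Finset.range (n + 3),
      (((n : ℚ) + 2) ^ 2 * Fk (n + 2) k
        - (11 * (n : ℚ) ^ 2 + 33 * (n : ℚ) + 25) * Fk (n + 1) k
        - ((n : ℚ) + 1) ^ 2 * Fk n k) = 0 := by
  rw [Finset.sum_congr rfl (fun k _ => tele n k), Finset.sum_range_sub (Gc n)]
  rw [show Gc n (n + 3) = 0 from if_neg (by omega)]
  simp [Gc]

lemma apery_eq_sum (m N : ℕ) (h : m + 1 ≤ N) :
    aperyA2 m = ∑ k ∈ Finset.range N, Fk m k := by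
  rw [aperyA2]
  exact Finset.sum_subset (Finset.range_subset_range.mpr h)
    (fun k _ hk => by
      have : m < k := by simpa using hk
      simp [Fk, Nat.choose_eq_zero_of_lt this])

lemma apery_rec (n : ℕ) :
    ((n : ℚ) + 2) ^ 2 * aperyA2 (n + 2)
      = (11 * (n : ℚ) ^ 2 + 33 * (n : ℚ) + 25) * aperyA2 (n + 1)
        + ((n : ℚ) + 1) ^ 2 * aperyA2 n := by
  have h := sum_tele n
  rw [Finset.sum_sub_distrib, Finset.sum_sub_distrib, ← Finset.mul_sum, ← Finset.mul_sum,
      ← Finset.mul_sum] at h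
  rw [apery_eq_sum (n + 2) (n + 3) (by omega), apery_eq_sum (n + 1) (n + 3) (by omega),
      apery_eq_sum n (n + 3) (by omega)]
  linarith [h]

lemma cb (n : ℕ) :
    ((n : ℚ) + 1) * ((2 * (n + 1)).choose (n + 1) : ℚ)
      = 2 * (2 * (n : ℚ) + 1) * ((2 * n).choose n : ℚ) := by
  have h := Nat.succ_mul_centralBinom_succ n
  unfold Nat.centralBinom at h
  exact_mod_cast h

/-- Coefficients of the Hadamard product. -/
def cseq (n : ℕ) : ℚ := ((2 * n).choose n : ℚ) * aperyA2 n

lemma c_rec (n : ℕ) :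
    ((n : ℚ) + 2) ^ 3 * cseq (n + 2)
      = 2 * (2 * (n : ℚ) + 3) * (11 * (n : ℚ) ^ 2 + 33 * (n : ℚ) + 25) * cseq (n + 1)
        + 4 * ((n : ℚ) + 1) * (2 * (n : ℚ) + 1) * (2 * (n : ℚ) + 3) * cseq n := by
  have h1 := cb (n + 1)
  have h2 := cb n
  have h3 := apery_rec n
  unfold cseq
  push_cast at h1 ⊢
  linear_combination (((n : ℚ) + 2) ^ 2 * aperyA2 (n + 2)) * h1
    + (2 * (2 * (n : ℚ) + 3) * ((2 * (n + 1)).choose (n + 1) : ℚ)) * h3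
    + (2 * (2 * (n : ℚ) + 3) * ((n : ℚ) + 1) * aperyA2 n) * h2

lemma coeff_theta (f : PowerSeries ℚ) (n : ℕ) :
    PowerSeries.coeff n (theta f) = (n : ℚ) * PowerSeries.coeff n f := by
  rw [theta, PowerSeries.coeff_mk]

lemma coeff_h (n : ℕ) : PowerSeries.coeff n hadamard5 = cseq n := by
  rw [hadamard5, PowerSeries.coeff_mk, cseq]

lemma coeff_inner2 (j : ℕ) :
    PowerSeries.coeff j ((2 : ℚ) • theta (opA hadamard5) + opA hadamard5)
      = (2 * (j : ℚ) + 1) * (11 * (j : ℚ) ^ 2 + 11 * (j : ℚ) + 3) * cseq j := by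
  simp only [opA, map_add, map_smul, coeff_theta, coeff_h, smul_eq_mul]
  ring

lemma coeff_inner3 (j : ℕ) :
    PowerSeries.coeff j
      (theta ((2 : ℚ) • theta ((2 : ℚ) • theta hadamard5 + (3 : ℚ) • hadamard5)
            + ((2 : ℚ) • theta hadamard5 + (3 : ℚ) • hadamard5))
        + ((2 : ℚ) • theta ((2 : ℚ) • theta hadamard5 + (3 : ℚ) • hadamard5)
            + ((2 : ℚ) • theta hadamard5 + (3 : ℚ) • hadamard5)))
      = ((j : ℚ) + 1) * (2 * (j : ℚ) + 1) * (2 * (j : ℚ) + 3) * cseq j := by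
  simp only [map_add, map_smul, coeff_theta, coeff_h, smul_eq_mul]
  ring


end AuxL35

/-- The Hadamard product of `Σ C(2n,n) t^n` with the Apéry ζ(2) series is
annihilated by `L_{3,5} = θ^3 - 2t(2θ+1)(11θ^2+11θ+3) - 4t^2(θ+1)(2θ+1)(2θ+3)`. -/
theorem hadamard_L35_annihilated :
    theta (theta (theta hadamard5))
      - (2 : ℚ) • (X * ((2 : ℚ) • theta (opA hadamard5) + opA hadamard5))
      - (4 : ℚ) • (X ^ 2 *
          (theta ((2 : ℚ) • theta ((2 : ℚ) • theta hadamard5 + (3 : ℚ) • hadamard5)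
                  + ((2 : ℚ) • theta hadamard5 + (3 : ℚ) • hadamard5))
            + ((2 : ℚ) • theta ((2 : ℚ) • theta hadamard5 + (3 : ℚ) • hadamard5)
                  + ((2 : ℚ) • theta hadamard5 + (3 : ℚ) • hadamard5)))) = 0 := by

  ext n
  simp only [map_sub, map_smul, smul_eq_mul, PowerSeries.coeff_zero_eq_constantCoeff,
    map_zero, LinearMap.zero_apply]
  rcases n with _ | n
  · simp [coeff_theta, PowerSeries.coeff_zero_X_mul, pow_two, mul_assoc,
      PowerSeries.coeff_zero_eq_constantCoeff]
  · rcases n with _ | j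
    · rw [PowerSeries.coeff_succ_X_mul, coeff_inner2]
      rw [show (X : ℚ⟦X⟧) ^ 2 = X * X from sq X, mul_assoc (X : ℚ⟦X⟧) X,
        PowerSeries.coeff_succ_X_mul, PowerSeries.coeff_zero_X_mul]
      simp only [coeff_theta, coeff_h]
      have h0 : cseq 0 = 1 := by
        simp [cseq, aperyA2]
      have h1 : cseq 1 = 6 := by
        rw [cseq, aperyA2]
        rw [Finset.sum_range_succ, Finset.sum_range_one]
        norm_num
      rw [h0, h1]
      norm_num
    · rw [PowerSeries.coeff_succ_X_mul, coeff_inner2]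
      rw [show j + 1 + 1 = j + 2 from rfl, PowerSeries.coeff_X_pow_mul, coeff_inner3]
      simp only [coeff_theta, coeff_h]
      have := c_rec j
      push_cast
      push_cast at this
      linear_combination this
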